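/- Let A be a Noetherian domain, let R be a Noetherian A-algebra, and let I ⊆ R be an ideal such that R/I is a finitely generated A-module. Let 0 → M_1 → M_2 → M_3 → 0 be a short exact sequence of finitely generated R-modules such that M_3/I^n M_3 is a projective A-module for all sufficiently large n. Then the induced sequence 0 → Hom_A^cts(M_3, A) → Hom_A^cts(M_2, A) → Hom_A^cts(M_1, A) → 0 is exact; in particular, every A-linear map φ : M_1 → A with φ(I^t M_1) = 0 for some t extends to an A-linear map ψ : M_2 → A with ψ(I^s M_2) = 0 for some s. -/
import Mathlib


/-- The relative Matlis dual / continuous dual: the `A`-submodule of `Hom_A(M, A)` consisting of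
the `A`-linear maps `φ : M → A` such that `φ(IᵗM) = 0` for some `t`. -/
def ContinuousDual (A : Type*) [CommRing A] (R : Type*) [CommRing R] [Algebra A R]
    (I : Ideal R) (M : Type*) [AddCommGroup M] [Module A M] [Module R M] :
    Submodule A (M →ₗ[A] A) where
  carrier := {φ | ∃ t : ℕ, ∀ r ∈ I ^ t, ∀ m : M, φ (r • m) = 0}
  add_mem' := by
    rintro φ ψ ⟨t, ht⟩ ⟨s, hs⟩
    exact ⟨t + s, fun r hr m => by
      have h1 := ht r (Ideal.pow_le_pow_right (Nat.le_add_right t s) hr) m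
      have h2 := hs r (Ideal.pow_le_pow_right (Nat.le_add_left s t) hr) m
      simp [h1, h2]⟩
  zero_mem' := ⟨0, fun r _ m => rfl⟩
  smul_mem' := by
    rintro a φ ⟨t, ht⟩
    exact ⟨t, fun r hr m => by simp [ht r hr m]⟩


/-- Aux: a functional vanishing on `I^t`-multiples vanishes on `I^t • ⊤`. -/
theorem aux_vanish {A R M : Type*} [CommRing A] [CommRing R] [Algebra A R]
    [AddCommGroup M] [Module A M] [Module R M] {I : Ideal R} {t : ℕ} {φ : M →ₗ[A] A}
    (h : ∀ r ∈ I ^ t, ∀ m : M, φ (r • m) = 0) {x : M}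
    (hx : x ∈ (I ^ t • ⊤ : Submodule R M)) : φ x = 0 := by
  refine Submodule.smul_induction_on hx (fun r hr m _ => h r hr m) (fun x y hx hy => ?_)
  rw [map_add, hx, hy, add_zero]


/-- **Exactness of the relative Matlis dual functor.**  Given a short exact sequence
`0 → M₁ → M₂ → M₃ → 0` of finitely generated `R`-modules such that `M₃/IⁿM₃` is projective over
`A` for all sufficiently large `n`, the dual sequence
`0 → Hom_A^cts(M₃,A) → Hom_A^cts(M₂,A) → Hom_A^cts(M₁,A) → 0` is exact.  In particular every
continuous `φ : M₁ → A` extends to a continuous `ψ : M₂ → A`. -/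

theorem stmt6 (A : Type) [CommRing A] [IsDomain A] [IsNoetherianRing A]
    (R : Type) [CommRing R] [Algebra A R] [IsNoetherianRing R]
    (I : Ideal R) [Module.Finite A (R ⧸ I)]
    (M₁ M₂ M₃ : Type)
    [AddCommGroup M₁] [Module A M₁] [Module R M₁] [IsScalarTower A R M₁] [Module.Finite R M₁]
    [AddCommGroup M₂] [Module A M₂] [Module R M₂] [IsScalarTower A R M₂] [Module.Finite R M₂]
    [AddCommGroup M₃] [Module A M₃] [Module R M₃] [IsScalarTower A R M₃] [Module.Finite R M₃]
    (f : M₁ →ₗ[R] M₂) (g : M₂ →ₗ[R] M₃)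
    (hf : Function.Injective f) (hg : Function.Surjective g)
    (hfg : LinearMap.range f = LinearMap.ker g)
    (hproj : ∃ N : ℕ, ∀ n : ℕ, N ≤ n →
      Module.Projective A (M₃ ⧸ (I ^ n • ⊤ : Submodule R M₃))) :
    -- the dual of `g` is injective
    (∀ φ : M₃ →ₗ[A] A, φ ∈ ContinuousDual A R I M₃ →
        φ.comp (g.restrictScalars A) = 0 → φ = 0) ∧
    -- exactness in the middle:  `ker f* = range g*`
    (∀ ψ : M₂ →ₗ[A] A, ψ ∈ ContinuousDual A R I M₂ →
        (ψ.comp (f.restrictScalars A) = 0 ↔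
          ∃ φ ∈ ContinuousDual A R I M₃, ψ = φ.comp (g.restrictScalars A))) ∧
    -- the dual of `f` is surjective:  every continuous functional on `M₁` extends to `M₂`
    (∀ φ : M₁ →ₗ[A] A, φ ∈ ContinuousDual A R I M₁ →
        ∃ ψ ∈ ContinuousDual A R I M₂, φ = ψ.comp (f.restrictScalars A)) := by
  obtain ⟨N₀, hN₀⟩ := hproj
  refine ⟨?_, ?_, ?_⟩
  · intro φ _ h
    ext m₃
    obtain ⟨m₂, rfl⟩ := hg m₃
    exact LinearMap.congr_fun h m₂
  · intro ψ hψ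
    constructor
    · intro hcomp
      -- ψ factors through g
      set gA : M₂ →ₗ[A] M₃ := g.restrictScalars A with hgA
      have hgA_surj : Function.Surjective gA := hg
      have hle : LinearMap.ker gA ≤ LinearMap.ker ψ := by
        intro x hx
        have hx' : x ∈ LinearMap.ker g := hx
        rw [← hfg] at hx'
        obtain ⟨m₁, rfl⟩ := hx'
        exact LinearMap.congr_fun hcomp m₁
      set e := LinearMap.quotKerEquivOfSurjective gA hgA_surj with he
      set φ : M₃ →ₗ[A] A :=
        (Submodule.liftQ (LinearMap.ker gA) ψ hle) ∘ₗ e.symm.toLinearMap with hφdef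
      have hfact : ∀ m : M₂, φ (g m) = ψ m := by
        intro m
        have h1 : e (Submodule.Quotient.mk m) = gA m := by rw [he]; rfl
        have h2 : e.symm (gA m) = Submodule.Quotient.mk m := by
          rw [← h1, LinearEquiv.symm_apply_apply]
        simp only [hφdef, LinearMap.comp_apply, LinearEquiv.coe_toLinearMap]
        rw [show (g m : M₃) = gA m from rfl, h2, Submodule.liftQ_apply]
      obtain ⟨t, ht⟩ := hψ
      refine ⟨φ, ⟨t, fun r hr m₃ => ?_⟩, ?_⟩
      · obtain ⟨m₂, rfl⟩ := hg m₃
        rw [← map_smul, hfact]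
        exact ht r hr m₂
      · ext m
        exact (hfact m).symm
    · rintro ⟨φ, hφ, rfl⟩
      ext m₁
      have : g (f m₁) = 0 := by
        rw [← LinearMap.mem_ker, ← hfg]
        exact LinearMap.mem_range_self f m₁
      simp [this]
  · intro φ hφ
    obtain ⟨t, ht⟩ := hφ
    obtain ⟨k, hk⟩ := Ideal.exists_pow_inf_eq_pow_smul I (LinearMap.range f)
    set n := max N₀ (t + k) with hn
    have hnk : k ≤ n := le_trans (Nat.le_add_left k t) (le_max_right _ _)
    have hnt : t ≤ n - k := by omega
    set p₂ : Submodule R M₂ := I ^ n • ⊤ with hp₂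
    set p₃ : Submodule R M₃ := I ^ n • ⊤ with hp₃
    haveI : Module.Projective A (M₃ ⧸ p₃) := hN₀ n (le_max_left _ _)
    have hmap : p₂ ≤ p₃.comap g := by
      rw [← Submodule.map_le_iff_le_comap, hp₂, Submodule.map_smul'']
      exact Submodule.smul_mono le_rfl le_top
    set gbar : (M₂ ⧸ p₂) →ₗ[R] (M₃ ⧸ p₃) := Submodule.mapQ p₂ p₃ g hmap with hgbar
    set π : M₂ →ₗ[R] M₂ ⧸ p₂ := p₂.mkQ with hπ
    set q : M₁ →ₗ[R] M₂ ⧸ p₂ := π ∘ₗ f with hq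
    have hgbar_mk : ∀ m : M₂, gbar (Submodule.Quotient.mk m) = Submodule.Quotient.mk (g m) :=
      fun m => rfl
    have hgbar_surj : Function.Surjective gbar := by
      intro y
      obtain ⟨m₃, rfl⟩ := Submodule.Quotient.mk_surjective p₃ y
      obtain ⟨m₂, rfl⟩ := hg m₃
      exact ⟨Submodule.Quotient.mk m₂, rfl⟩
    have hrange : ∀ x : M₂ ⧸ p₂, (∃ m₁ : M₁, q m₁ = x) ↔ gbar x = 0 := by
      intro x
      constructor
      · rintro ⟨m₁, rfl⟩
        have : g (f m₁) = 0 := by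
          rw [← LinearMap.mem_ker, ← hfg]; exact LinearMap.mem_range_self f m₁
        simp only [hq, LinearMap.comp_apply, hπ, Submodule.mkQ_apply, hgbar_mk, this,
          Submodule.Quotient.mk_eq_zero]
        exact p₃.zero_mem
      · intro hx
        obtain ⟨m, rfl⟩ := Submodule.Quotient.mk_surjective p₂ x
        rw [hgbar_mk, Submodule.Quotient.mk_eq_zero] at hx
        have : g m ∈ Submodule.map g p₂ := by
          rw [hp₂, Submodule.map_smul'', Submodule.map_top, LinearMap.range_eq_top.mpr hg]
          exact hx
        obtain ⟨m', hm', hm'eq⟩ := this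
        have hker : m - m' ∈ LinearMap.ker g := by
          simp [LinearMap.mem_ker, map_sub, hm'eq]
        rw [← hfg] at hker
        obtain ⟨m₁, hm₁⟩ := hker
        refine ⟨m₁, ?_⟩
        simp only [hq, LinearMap.comp_apply, hπ, Submodule.mkQ_apply, hm₁]
        rw [← sub_eq_zero, ← Submodule.Quotient.mk_sub, Submodule.Quotient.mk_eq_zero]
        simpa using p₂.neg_mem hm'
    -- kernel of q is contained in I^t • ⊤
    have hker_q : ∀ m₁ : M₁, q m₁ = 0 → m₁ ∈ (I ^ t • ⊤ : Submodule R M₁) := by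
      intro m₁ hm₁
      have h1 : f m₁ ∈ p₂ ⊓ LinearMap.range f := by
        constructor
        · have : Submodule.Quotient.mk (f m₁) = (0 : M₂ ⧸ p₂) := by
            rw [← hm₁, hq]; rfl
          exact (Submodule.Quotient.mk_eq_zero p₂).mp this
        · exact LinearMap.mem_range_self f m₁
      rw [hk n hnk] at h1
      have h2 : I ^ (n - k) • (I ^ k • ⊤ ⊓ LinearMap.range f) ≤
          Submodule.map f (I ^ (n - k) • ⊤) := by
        rw [Submodule.map_smul'', Submodule.map_top]
        exact Submodule.smul_mono le_rfl inf_le_right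
      obtain ⟨m₁', hm₁', heq⟩ := h2 h1
      have : m₁' = m₁ := hf heq
      subst this
      exact Submodule.smul_mono_left (Ideal.pow_le_pow_right hnt) hm₁'
    -- A-linear versions
    set qA : M₁ →ₗ[A] M₂ ⧸ p₂ := q.restrictScalars A with hqA
    have hkerA : LinearMap.ker qA ≤ LinearMap.ker φ := by
      intro m₁ hm₁
      exact aux_vanish ht (hker_q m₁ hm₁)
    set e := qA.quotKerEquivRange with he
    set φ' : ↥(LinearMap.range qA) →ₗ[A] A :=
      (Submodule.liftQ (LinearMap.ker qA) φ hkerA) ∘ₗ e.symm.toLinearMap with hφ'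
    have hφ'_apply : ∀ m₁ : M₁, ∀ h, φ' ⟨qA m₁, h⟩ = φ m₁ := by
      intro m₁ h
      have h1 : e (Submodule.Quotient.mk m₁) = ⟨qA m₁, h⟩ := by
        apply Subtype.ext
        simp [he]
      have h2 : e.symm ⟨qA m₁, h⟩ = Submodule.Quotient.mk m₁ := by
        rw [← h1, LinearEquiv.symm_apply_apply]
      simp only [hφ', LinearMap.comp_apply, LinearEquiv.coe_toLinearMap, h2,
        Submodule.liftQ_apply]
    -- splitting from projectivity
    set gbarA : (M₂ ⧸ p₂) →ₗ[A] (M₃ ⧸ p₃) := gbar.restrictScalars A with hgbarA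
    obtain ⟨s, hs⟩ := Module.projective_lifting_property gbarA LinearMap.id
      (by exact hgbar_surj)
    have hs' : ∀ y, gbarA (s y) = y := fun y => LinearMap.congr_fun hs y
    have hgg : ∀ x, gbar x = gbarA x := fun x => by rw [hgbarA]; rfl
    have hqq : ∀ x, qA x = q x := fun x => by rw [hqA]; rfl
    have hmem : ∀ m : M₂, ((LinearMap.id - s ∘ₗ gbarA) ∘ₗ (π.restrictScalars A)) m ∈
        LinearMap.range qA := by
      intro m
      simp only [LinearMap.comp_apply, LinearMap.restrictScalars_apply, LinearMap.sub_apply,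
        LinearMap.id_apply]
      have h0 : gbar (π m - s (gbarA (π m))) = 0 := by
        rw [map_sub]
        simp only [hgg]
        rw [hs', sub_self]
      obtain ⟨m₁, hm₁⟩ := (hrange (π m - s (gbarA (π m)))).mpr h0
      exact ⟨m₁, by rw [hqq]; exact hm₁⟩
    set ρ : M₂ →ₗ[A] ↥(LinearMap.range qA) :=
      LinearMap.codRestrict (LinearMap.range qA)
        ((LinearMap.id - s ∘ₗ gbarA) ∘ₗ (π.restrictScalars A)) hmem with hρ
    refine ⟨φ' ∘ₗ ρ, ⟨n, fun r hr m => ?_⟩, ?_⟩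
    · -- continuity
      have hmk : π (r • m) = 0 := by
        rw [hπ, Submodule.mkQ_apply, Submodule.Quotient.mk_eq_zero]
        exact Submodule.smul_mem_smul hr Submodule.mem_top
      have hρ0 : ρ (r • m) = 0 := by
        apply Subtype.ext
        rw [hρ]
        simp only [LinearMap.codRestrict_apply, LinearMap.comp_apply,
          LinearMap.restrictScalars_apply, LinearMap.sub_apply, LinearMap.id_apply, hmk,
          map_zero, sub_zero, ZeroMemClass.coe_zero]
      simp only [LinearMap.comp_apply, hρ0, map_zero]
    · -- ψ ∘ f = φ
      ext m₁
      have h0 : gbarA (π (f m₁)) = 0 := by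
        rw [← hgg, hπ, Submodule.mkQ_apply, hgbar_mk]
        have hg0 : g (f m₁) = 0 := by
          rw [← LinearMap.mem_ker, ← hfg]; exact LinearMap.mem_range_self f m₁
        rw [hg0]
        exact (Submodule.Quotient.mk_eq_zero p₃).mpr p₃.zero_mem
      have hρf : ρ (f m₁) = ⟨qA m₁, LinearMap.mem_range_self qA m₁⟩ := by
        apply Subtype.ext
        rw [hρ]
        simp only [LinearMap.codRestrict_apply, LinearMap.comp_apply,
          LinearMap.restrictScalars_apply, LinearMap.sub_apply, LinearMap.id_apply, h0,
          map_zero, sub_zero]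
        rw [hqq, hq]; rfl
      simp only [LinearMap.comp_apply, LinearMap.restrictScalars_apply, hρf, hφ'_apply]
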